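/- Let Z₁(x), Z₁(x′) be jointly distributed square-integrable random variables and Z₂(x), Z₂(x′), δ₃(x) be such that Z₂(·) and δ₃(·) are independent of Z₁(·) and of each other. Define Z₃(x) = ρ₁(x)Z₁(x) + ρ₂(x)Z₂(x) + δ₃(x). Then the partial covariance of Z₃(x) and Z₁(x′) given (Z₁(x), Z₂(x)) is zero; that is, Cov(Z₃(x), Z₁(x′)) = [Cov(Z₃(x),Z₁(x)), Cov(Z₃(x),Z₂(x))] · diag(Var Z₁(x), Var Z₂(x))⁻¹ · [Cov(Z₁(x′),Z₁(x)), Cov(Z₁(x′),Z₂(x))]ᵀ. -/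

import Mathlib

open MeasureTheory ProbabilityTheory Matrix

/-- Covariance of two real random variables: `Cov(X,Y) = E[XY] - E[X]E[Y]`. -/
noncomputable def cov {Ω : Type*} [MeasurableSpace Ω] (μ : Measure Ω) (X Y : Ω → ℝ) : ℝ :=
  (∫ ω, X ω * Y ω ∂μ) - (∫ ω, X ω ∂μ) * (∫ ω, Y ω ∂μ)

/-!
Independence makes `Z₂x` and `δ₃x` uncorrelated with `Z₁x`, `Z₁x'` and each other, so bilinearity
of the covariance gives `Cov(Z₃x, Z₁x') = ρ₁ Cov(Z₁x, Z₁x')`, `Cov(Z₃x, Z₁x) = ρ₁ Var Z₁x` and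
`Cov(Z₁x', Z₂x) = 0`. The right-hand side therefore collapses to
`ρ₁ Var Z₁x · Cov(Z₁x', Z₁x) / Var Z₁x = ρ₁ Cov(Z₁x, Z₁x')`.
-/

lemma cov_eq_covariance {Ω : Type*} [MeasurableSpace Ω] {μ : Measure Ω} [IsProbabilityMeasure μ]
    {X Y : Ω → ℝ} (hX : MemLp X 2 μ) (hY : MemLp Y 2 μ) :
    cov μ X Y = covariance X Y μ :=
  (covariance_eq_sub hX hY).symm

lemma Matrix.inv_diagonal_of_ne_zero {n K : Type*} [Fintype n] [DecidableEq n] [Field K]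
    {v : n → K} (hv : ∀ i, v i ≠ 0) :
    (diagonal v)⁻¹ = diagonal fun i => (v i)⁻¹ := by
  refine inv_eq_right_inv ?_
  rw [diagonal_mul_diagonal, ← diagonal_one]
  exact congrArg diagonal (funext fun i => mul_inv_cancel₀ (hv i))

lemma Matrix.dotProduct_inv_diagonal_mulVec_fin_two {K : Type*} [Field K] {a b : K}
    (ha : a ≠ 0) (hb : b ≠ 0) (u₁ u₂ v₁ v₂ : K) :
    ![u₁, u₂] ⬝ᵥ ((diagonal ![a, b])⁻¹ *ᵥ ![v₁, v₂]) = u₁ * v₁ / a + u₂ * v₂ / b := by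
  rw [inv_diagonal_of_ne_zero (v := ![a, b]) (Fin.forall_fin_two.2 ⟨ha, hb⟩)]
  simp only [dotProduct, mulVec_diagonal, Fin.sum_univ_two, cons_val_zero, cons_val_one]
  field_simp

theorem stmt2_general {Ω : Type*} [MeasurableSpace Ω] (μ : Measure Ω) [IsProbabilityMeasure μ]
    (Z₁x Z₁x' Z₂x δ₃x : Ω → ℝ) (ρ₁ ρ₂ : ℝ)
    (hZ₁x : MemLp Z₁x 2 μ) (hZ₁x' : MemLp Z₁x' 2 μ)
    (hZ₂x : MemLp Z₂x 2 μ) (hδ₃x : MemLp δ₃x 2 μ)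
    -- `Z₂` and `δ₃` are independent of the process `Z₁` (at both x and x') and of each other
    (h₂₁ : IndepFun Z₂x Z₁x μ) (h₂₁' : IndepFun Z₂x Z₁x' μ)
    (hδ₁ : IndepFun δ₃x Z₁x μ) (hδ₁' : IndepFun δ₃x Z₁x' μ)
    (hδ₂ : IndepFun δ₃x Z₂x μ)
    (hv₁ : 0 < cov μ Z₁x Z₁x) (hv₂ : 0 < cov μ Z₂x Z₂x)
    (Z₃x : Ω → ℝ) (hZ₃x : Z₃x = fun ω => ρ₁ * Z₁x ω + ρ₂ * Z₂x ω + δ₃x ω) :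
    cov μ Z₃x Z₁x' =
      ![cov μ Z₃x Z₁x, cov μ Z₃x Z₂x] ⬝ᵥ
        ((Matrix.diagonal ![cov μ Z₁x Z₁x, cov μ Z₂x Z₂x])⁻¹ *ᵥ
          ![cov μ Z₁x' Z₁x, cov μ Z₁x' Z₂x]) := by
  rw [dotProduct_inv_diagonal_mulVec_fin_two hv₁.ne' hv₂.ne']
  have hρZ₁ : MemLp (fun ω => ρ₁ * Z₁x ω) 2 μ := hZ₁x.const_mul ρ₁
  have hρZ₂ : MemLp (fun ω => ρ₂ * Z₂x ω) 2 μ := hZ₂x.const_mul ρ₂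
  have hZ₃ : MemLp Z₃x 2 μ := hZ₃x ▸ (hρZ₁.add hρZ₂).add hδ₃x
  have covariance_Z₃ : ∀ {W}, MemLp W 2 μ →
      covariance Z₃x W μ =
        ρ₁ * covariance Z₁x W μ + ρ₂ * covariance Z₂x W μ + covariance δ₃x W μ :=
    fun hW => by
      rw [hZ₃x, ← covariance_const_mul_left, ← covariance_const_mul_left,
        ← covariance_add_left hρZ₁ hρZ₂ hW, ← covariance_add_left (hρZ₁.add hρZ₂) hδ₃x hW]
      rfl
  simp only [cov_eq_covariance, covariance_Z₃, hZ₁x, hZ₁x', hZ₂x, hZ₃] at hv₁ ⊢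
  rw [covariance_comm Z₁x' Z₂x, covariance_comm Z₁x Z₂x, covariance_comm Z₁x' Z₁x,
    h₂₁.covariance_eq_zero hZ₂x hZ₁x, h₂₁'.covariance_eq_zero hZ₂x hZ₁x',
    hδ₁.covariance_eq_zero hδ₃x hZ₁x, hδ₁'.covariance_eq_zero hδ₃x hZ₁x',
    hδ₂.covariance_eq_zero hδ₃x hZ₂x]
  field_simp
  ring

/-- Markov property (b) of the GMGP model for the 3-node in-tree.
With mean-zero square-integrable `Z₁x, Z₁x', Z₂x, δ₃x`, where `Z₂x` and `δ₃x` are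
independent of `(Z₁x, Z₁x')` and of each other, and
`Z₃x = ρ₁ Z₁x + ρ₂ Z₂x + δ₃x`, the partial covariance of `Z₃(x)` and `Z₁(x')`
given `(Z₁(x), Z₂(x))` is zero. -/
theorem stmt2 {Ω : Type*} [MeasurableSpace Ω] (μ : Measure Ω) [IsProbabilityMeasure μ]
    (Z₁x Z₁x' Z₂x δ₃x : Ω → ℝ) (ρ₁ ρ₂ : ℝ)
    (hZ₁x : MemLp Z₁x 2 μ) (hZ₁x' : MemLp Z₁x' 2 μ)
    (hZ₂x : MemLp Z₂x 2 μ) (hδ₃x : MemLp δ₃x 2 μ)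
    (hm₁ : ∫ ω, Z₁x ω ∂μ = 0) (hm₁' : ∫ ω, Z₁x' ω ∂μ = 0)
    (hm₂ : ∫ ω, Z₂x ω ∂μ = 0) (hmδ : ∫ ω, δ₃x ω ∂μ = 0)
    -- `Z₂` and `δ₃` are independent of the process `Z₁` (at both x and x') and of each other
    (h₂₁ : IndepFun Z₂x Z₁x μ) (h₂₁' : IndepFun Z₂x Z₁x' μ)
    (hδ₁ : IndepFun δ₃x Z₁x μ) (hδ₁' : IndepFun δ₃x Z₁x' μ)
    (hδ₂ : IndepFun δ₃x Z₂x μ)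
    (hv₁ : 0 < cov μ Z₁x Z₁x) (hv₂ : 0 < cov μ Z₂x Z₂x)
    (Z₃x : Ω → ℝ) (hZ₃x : Z₃x = fun ω => ρ₁ * Z₁x ω + ρ₂ * Z₂x ω + δ₃x ω) :
    cov μ Z₃x Z₁x' =
      ![cov μ Z₃x Z₁x, cov μ Z₃x Z₂x] ⬝ᵥ
        ((Matrix.diagonal ![cov μ Z₁x Z₁x, cov μ Z₂x Z₂x])⁻¹ *ᵥ
          ![cov μ Z₁x' Z₁x, cov μ Z₁x' Z₂x]) :=
  stmt2_general μ Z₁x Z₁x' Z₂x δ₃x ρ₁ ρ₂ hZ₁x hZ₁x' hZ₂x hδ₃x h₂₁ h₂₁' hδ₁ hδ₁' hδ₂ hv₁ hv₂ Z₃x hZ₃x
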